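/- Column span of 𝐐: let [Q, Q⊥] be an n×n orthogonal matrix with Q ∈ ℝ^{n×r}, and define 𝐐 = [Q⊗_S Q, √2·Ψ_nᵀ(Q⊗Q⊥)]. Then the column span of 𝐐 equals {svec(VQᵀ) : V ∈ ℝ^{n×r}} and 𝐐ᵀ𝐐 = I_d, where d = nr − r(r−1)/2. -/

import Mathlib

open Matrix
open scoped Kronecker

noncomputable section

/-- Euclidean norm of a vector. -/
def vnorm {I : Type*} [Fintype I] (v : I → ℝ) : ℝ := Real.sqrt (∑ i, v i ^ 2)

/-- Frobenius norm of a matrix. -/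
def frobNorm {I J : Type*} [Fintype I] [Fintype J] (A : Matrix I J ℝ) : ℝ :=
  Real.sqrt (∑ i, ∑ j, A i j ^ 2)

/-- Spectral norm (ℓ₂ operator norm) of a matrix. -/
def specNorm {I J : Type*} [Fintype I] [Fintype J] (A : Matrix I J ℝ) : ℝ :=
  sSup {c | ∃ v : J → ℝ, vnorm v ≤ 1 ∧ c = vnorm (A *ᵥ v)}

/-- Largest (real) eigenvalue of a square matrix. -/
def lmax {I : Type*} [Fintype I] (A : Matrix I I ℝ) : ℝ :=
  sSup {t | ∃ v : I → ℝ, v ≠ 0 ∧ A *ᵥ v = t • v}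

/-- Smallest (real) eigenvalue of a square matrix. -/
def lmin {I : Type*} [Fintype I] (A : Matrix I I ℝ) : ℝ :=
  sInf {t | ∃ v : I → ℝ, v ≠ 0 ∧ A *ᵥ v = t • v}

/-- Column-stacking vectorization `vec`: `vecM X (j, i) = X i j`. -/
def vecM {J : Type*} (X : Matrix J J ℝ) : J × J → ℝ := fun p => X p.2 p.1

/-- `Ψ` is an orthonormal basis matrix for the space of vectorized symmetric matrices:
`ΨᵀΨ = I` and `ΨΨᵀ` is the orthogonal projection onto vectorized symmetric matrices. -/
def IsSymBasis {J K : Type*} [Fintype J] [Fintype K] [DecidableEq K]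
    (Ψ : Matrix (J × J) K ℝ) : Prop :=
  Ψᵀ * Ψ = 1 ∧ ∀ X : Matrix J J ℝ, Ψ *ᵥ (Ψᵀ *ᵥ vecM X) = vecM ((1/2 : ℝ) • (X + Xᵀ))

/-- Symmetric vectorization with respect to the basis matrix `Ψ`. -/
def svec {J K : Type*} [Fintype J] (Ψ : Matrix (J × J) K ℝ) (X : Matrix J J ℝ) : K → ℝ :=
  Ψᵀ *ᵥ vecM X

/-- Symmetric Kronecker product with respect to the basis matrices `Ψ₁, Ψ₂`. -/
def skron {J J' K K' : Type*} [Fintype J] [Fintype J']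
    (Ψ₁ : Matrix (J × J) K ℝ) (Ψ₂ : Matrix (J' × J') K' ℝ)
    (A B : Matrix J J' ℝ) : Matrix K K' ℝ :=
  (1/2 : ℝ) • (Ψ₁ᵀ * ((A ⊗ₖ B + B ⊗ₖ A) * Ψ₂))

/-- Positive semidefinite square root (junk value `0` off the PSD cone). -/
def psqrt {J : Type*} [Fintype J] [DecidableEq J] (A : Matrix J J ℝ) : Matrix J J ℝ :=
  @dite _ A.PosSemidef (Classical.dec _) (fun h => (h.1.eigenvectorUnitary : Matrix J J ℝ) *
    diagonal ((↑) ∘ Real.sqrt ∘ h.1.eigenvalues) * (star h.1.eigenvectorUnitary : Matrix J J ℝ)) (fun _ => 0)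

/-- Condition number in spectral norm. -/
def condNum {J : Type*} [Fintype J] [DecidableEq J] (M : Matrix J J ℝ) : ℝ :=
  specNorm M * specNorm M⁻¹

/-- Assumption A1: `W` is the Nesterov--Todd scaling point of a well-centered
primal-dual pair `(X, S)` that is `O(μ)`-close to a strictly complementary solution. -/
def A1 {n : ℕ} (μ L δ χ₁ : ℝ) (W X S Xs Ss : Matrix (Fin n) (Fin n) ℝ) : Prop :=
  X.PosDef ∧ S.PosDef ∧ Xs.PosSemidef ∧ Ss.PosSemidef ∧ Xs * Ss = 0 ∧
    (Xs + Ss - χ₁⁻¹ • (1 : Matrix (Fin n) (Fin n) ℝ)).PosSemidef ∧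
    ((1 : Matrix (Fin n) (Fin n) ℝ) - (Xs + Ss)).PosSemidef ∧
    W = psqrt X * (psqrt (psqrt X * S * psqrt X))⁻¹ * psqrt X ∧
    specNorm ((1/μ) • (psqrt X * S * psqrt X) - 1) ≤ δ ∧
    specNorm (X - Xs) ≤ L * μ ∧ specNorm (S - Ss) ≤ L

section Stmt15Aux

/-- Kronecker product acting on a "vectorized" vector. -/
lemma kron_mv {I J I' J' : Type*} [Fintype J] [Fintype J']
    (A : Matrix I J ℝ) (B : Matrix I' J' ℝ) (v : J × J' → ℝ) :
    (A ⊗ₖ B) *ᵥ v = fun p : I × I' =>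
      (B * Matrix.of (fun (b : J') (a : J) => v (a, b)) * Aᵀ) p.2 p.1 := by
  funext p
  simp only [Matrix.mulVec, dotProduct, Matrix.kroneckerMap_apply, Matrix.mul_apply,
    Matrix.transpose_apply, Fintype.sum_prod_type, Finset.sum_mul, Finset.mul_sum, Matrix.of_apply]
  apply Finset.sum_congr rfl
  intro j _
  apply Finset.sum_congr rfl
  intro j' _
  ring

lemma mv_ext {I J : Type*} [Fintype J] [DecidableEq J] {M N : Matrix I J ℝ}
    (h : ∀ v, M *ᵥ v = N *ᵥ v) : M = N := by
  ext i j
  have := congrFun (h (Pi.single j 1)) i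
  simpa [Matrix.mulVec_single] using this

lemma sb_cancel {J K : Type*} [Fintype J] [Fintype K] [DecidableEq K]
    {Ψ : Matrix (J × J) K ℝ} (h1 : Ψᵀ * Ψ = 1) (v : K → ℝ) :
    Ψᵀ *ᵥ (Ψ *ᵥ v) = v := by
  rw [Matrix.mulVec_mulVec, h1, Matrix.one_mulVec]

lemma svec_sym {J K : Type*} [Fintype J] [Fintype K] [DecidableEq K]
    {Ψ : Matrix (J × J) K ℝ} (h : IsSymBasis Ψ) (X : Matrix J J ℝ) :
    svec Ψ X = svec Ψ ((1/2 : ℝ) • (X + Xᵀ)) := by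
  have h2 := congrArg (fun w => Ψᵀ *ᵥ w) (h.2 X)
  rw [sb_cancel h.1] at h2
  exact h2

lemma svec_add {J K : Type*} [Fintype J] (Ψ : Matrix (J × J) K ℝ) (X Y : Matrix J J ℝ) :
    svec Ψ (X + Y) = svec Ψ X + svec Ψ Y := by
  unfold svec
  rw [show vecM (X + Y) = vecM X + vecM Y from rfl, Matrix.mulVec_add]

lemma svec_smul {J K : Type*} [Fintype J] (Ψ : Matrix (J × J) K ℝ) (c : ℝ) (X : Matrix J J ℝ) :
    svec Ψ (c • X) = c • svec Ψ X := by
  unfold svec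
  rw [show vecM (c • X) = c • vecM X from rfl, Matrix.mulVec_smul]

lemma skronQQ {J J' K K' : Type*} [Fintype J] [Fintype J']
    (Ψ₁ : Matrix (J × J) K ℝ) (Ψ₂ : Matrix (J' × J') K' ℝ) (Q : Matrix J J' ℝ) :
    skron Ψ₁ Ψ₂ Q Q = Ψ₁ᵀ * ((Q ⊗ₖ Q) * Ψ₂) := by
  unfold skron
  rw [← two_smul ℝ (Q ⊗ₖ Q), Matrix.smul_mul, Matrix.mul_smul, smul_smul]
  norm_num

lemma kron_mv' {I J J' : Type*} [Fintype J] [Fintype J']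
    (A : Matrix I J ℝ) (B : Matrix I J' ℝ) (v : J × J' → ℝ) :
    (A ⊗ₖ B) *ᵥ v = vecM (B * Matrix.of (fun (b : J') (a : J) => v (a, b)) * Aᵀ) :=
  kron_mv A B v

lemma of_vecM {J : Type*} (S : Matrix J J ℝ) :
    Matrix.of (fun b a => vecM S (a, b)) = S := rfl

lemma vecM_of {J : Type*} (w : J × J → ℝ) :
    vecM (Matrix.of (fun (b : J) (a : J) => w (a, b))) = w := rfl

lemma lam_smul {J J' : Type*} (c : ℝ) (w : J × J' → ℝ) :
    (fun p : J × J' =>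
      ((c • Matrix.of (fun (b : J') (a : J) => w (a, b))) : Matrix J' J ℝ) p.2 p.1) = c • w := rfl

end Stmt15Aux

/-- Lemma A.2, column span of `𝐐`:
`colspan(𝐐) = {svec(VQᵀ) : V ∈ ℝ^{n×r}}` and `𝐐ᵀ𝐐 = I_d` with `d = nr − r(r−1)/2`. -/
theorem stmt15 {n r : ℕ}
    (Ψn : Matrix (Fin n × Fin n) (Fin (n * (n + 1) / 2)) ℝ) (hΨn : IsSymBasis Ψn)
    (Ψr : Matrix (Fin r × Fin r) (Fin (r * (r + 1) / 2)) ℝ) (hΨr : IsSymBasis Ψr)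
    (Q : Matrix (Fin n) (Fin r) ℝ) (Qp : Matrix (Fin n) (Fin (n - r)) ℝ)
    -- `[Q, Q⊥]` is orthogonal
    (hQQ : Qᵀ * Q = 1) (hPP : Qpᵀ * Qp = 1) (hQP : Qᵀ * Qp = 0)
    (hfull : Q * Qᵀ + Qp * Qpᵀ = 1)
    (bQ : Matrix (Fin (n * (n + 1) / 2)) (Fin (r * (r + 1) / 2) ⊕ Fin r × Fin (n - r)) ℝ)
    (hbQ : bQ = Matrix.fromCols (skron Ψn Ψr Q Q) (Real.sqrt 2 • (Ψnᵀ * (Q ⊗ₖ Qp)))) :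
    (∀ z : Fin (n * (n + 1) / 2) → ℝ,
      (∃ h, bQ *ᵥ h = z) ↔ ∃ V : Matrix (Fin n) (Fin r) ℝ, svec Ψn (V * Qᵀ) = z) ∧
    bQᵀ * bQ = 1 ∧
    Fintype.card (Fin (r * (r + 1) / 2) ⊕ Fin r × Fin (n - r)) = n * r - r * (r - 1) / 2 := by
  obtain ⟨hΨn1, hΨn2⟩ := hΨn
  obtain ⟨hΨr1, hΨr2⟩ := hΨr
  have s2pos : (0:ℝ) < Real.sqrt 2 := Real.sqrt_pos.mpr (by norm_num)
  have hPQ : Qpᵀ * Q = 0 := by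
    have := congrArg Matrix.transpose hQP
    simpa using this
  have hQQ' : ∀ {c : Type} [Fintype c] (M : Matrix (Fin r) c ℝ), Qᵀ * (Q * M) = M := by
    intro c _ M; rw [← Matrix.mul_assoc, hQQ, Matrix.one_mul]
  have hQP' : ∀ {c : Type} [Fintype c] (M : Matrix (Fin (n - r)) c ℝ), Qᵀ * (Qp * M) = 0 := by
    intro c _ M; rw [← Matrix.mul_assoc, hQP, Matrix.zero_mul]
  have hPQ' : ∀ {c : Type} [Fintype c] (M : Matrix (Fin r) c ℝ), Qpᵀ * (Q * M) = 0 := by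
    intro c _ M; rw [← Matrix.mul_assoc, hPQ, Matrix.zero_mul]
  have hPP' : ∀ {c : Type} [Fintype c] (M : Matrix (Fin (n - r)) c ℝ), Qpᵀ * (Qp * M) = M := by
    intro c _ M; rw [← Matrix.mul_assoc, hPP, Matrix.one_mul]
  have key : ∀ (h₁ : Fin (r * (r + 1) / 2) → ℝ) (h₂ : Fin r × Fin (n - r) → ℝ),
      bQ *ᵥ Sum.elim h₁ h₂ =
        svec Ψn ((Q * Matrix.of (fun a b => (Ψr *ᵥ h₁) (b, a))
          + Real.sqrt 2 • (Qp * Matrix.of (fun b a => h₂ (a, b)))) * Qᵀ) := by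
    intro h₁ h₂
    rw [hbQ, Matrix.fromCols_mulVec_sumElim]
    have e1 : skron Ψn Ψr Q Q *ᵥ h₁
        = svec Ψn (Q * Matrix.of (fun a b => (Ψr *ᵥ h₁) (b, a)) * Qᵀ) := by
      rw [skronQQ]
      simp only [← Matrix.mulVec_mulVec]
      rw [kron_mv' Q Q]
      rfl
    have e2 : (Real.sqrt 2 • (Ψnᵀ * (Q ⊗ₖ Qp))) *ᵥ h₂
        = Real.sqrt 2 • svec Ψn (Qp * Matrix.of (fun b a => h₂ (a, b)) * Qᵀ) := by
      rw [Matrix.smul_mulVec]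
      simp only [← Matrix.mulVec_mulVec]
      rw [kron_mv' Q Qp]
      rfl
    rw [e1, e2, Matrix.add_mul, Matrix.smul_mul, svec_add, svec_smul]
  have sand1 : ∀ Y : Matrix (Fin r) (Fin r) ℝ,
      Qᵀ * ((1/2 : ℝ) • (Q * Y * Qᵀ + (Q * Y * Qᵀ)ᵀ)) * Q = (1/2 : ℝ) • (Y + Yᵀ) := by
    intro Y
    simp only [Matrix.transpose_mul, Matrix.transpose_transpose, Matrix.mul_smul,
      Matrix.smul_mul, Matrix.mul_add, Matrix.add_mul, Matrix.mul_assoc, hQQ, hQP, hPQ, hPP,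
      hQQ', hQP', hPQ', hPP', Matrix.mul_one, Matrix.one_mul, Matrix.mul_zero, Matrix.zero_mul,
      add_zero, zero_add, smul_zero]
  have sand2 : ∀ Z : Matrix (Fin (n - r)) (Fin r) ℝ,
      Qᵀ * ((1/2 : ℝ) • (Qp * Z * Qᵀ + (Qp * Z * Qᵀ)ᵀ)) * Q = 0 := by
    intro Z
    simp only [Matrix.transpose_mul, Matrix.transpose_transpose, Matrix.mul_smul,
      Matrix.smul_mul, Matrix.mul_add, Matrix.add_mul, Matrix.mul_assoc, hQQ, hQP, hPQ, hPP,
      hQQ', hQP', hPQ', hPP', Matrix.mul_one, Matrix.one_mul, Matrix.mul_zero, Matrix.zero_mul,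
      add_zero, zero_add, smul_zero]
  have sand3 : ∀ Z : Matrix (Fin (n - r)) (Fin r) ℝ,
      Qpᵀ * ((1/2 : ℝ) • (Qp * Z * Qᵀ + (Qp * Z * Qᵀ)ᵀ)) * Q = (1/2 : ℝ) • Z := by
    intro Z
    simp only [Matrix.transpose_mul, Matrix.transpose_transpose, Matrix.mul_smul,
      Matrix.smul_mul, Matrix.mul_add, Matrix.add_mul, Matrix.mul_assoc, hQQ, hQP, hPQ, hPP,
      hQQ', hQP', hPQ', hPP', Matrix.mul_one, Matrix.one_mul, Matrix.mul_zero, Matrix.zero_mul,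
      add_zero, zero_add, smul_zero]
  have trC1 : (skron Ψn Ψr Q Q)ᵀ = Ψrᵀ * ((Qᵀ ⊗ₖ Qᵀ) * Ψn) := by
    rw [skronQQ, Matrix.transpose_mul, Matrix.transpose_mul, Matrix.transpose_transpose,
      ← Matrix.kroneckerMap_transpose, Matrix.mul_assoc]
  have trC2 : (Real.sqrt 2 • (Ψnᵀ * (Q ⊗ₖ Qp)))ᵀ
      = Real.sqrt 2 • ((Qᵀ ⊗ₖ Qpᵀ) * Ψn) := by
    rw [Matrix.transpose_smul, Matrix.transpose_mul, Matrix.transpose_transpose,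
      ← Matrix.kroneckerMap_transpose]
  refine ⟨?_, ?_, ?_⟩
  · intro z
    constructor
    · rintro ⟨h, rfl⟩
      have hh : h = Sum.elim (fun k => h (Sum.inl k)) (fun p => h (Sum.inr p)) := by
        funext x; cases x <;> rfl
      refine ⟨Q * Matrix.of (fun a b => (Ψr *ᵥ fun k => h (Sum.inl k)) (b, a))
        + Real.sqrt 2 • (Qp * Matrix.of (fun b a => h (Sum.inr (a, b)))), ?_⟩
      conv_rhs => rw [hh, key]
    · rintro ⟨V, rfl⟩
      refine ⟨Sum.elim (Ψrᵀ *ᵥ vecM (Qᵀ * V))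
        (fun p => (Real.sqrt 2)⁻¹ * (Qpᵀ * V) p.2 p.1), ?_⟩
      rw [key]
      have hA : Matrix.of (fun a b => (Ψr *ᵥ (Ψrᵀ *ᵥ vecM (Qᵀ * V))) (b, a))
          = (1/2 : ℝ) • (Qᵀ * V + (Qᵀ * V)ᵀ) := by
        rw [hΨr2]; rfl
      have hB : Matrix.of (fun (b : Fin (n - r)) (a : Fin r) =>
          (fun p : Fin r × Fin (n - r) => (Real.sqrt 2)⁻¹ * (Qpᵀ * V) p.2 p.1) (a, b))
          = (Real.sqrt 2)⁻¹ • (Qpᵀ * V) := rfl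
      rw [hA, hB]
      simp only [Matrix.mul_smul]
      rw [smul_smul, mul_inv_cancel₀ (ne_of_gt s2pos), one_smul]
      rw [svec_sym ⟨hΨn1, hΨn2⟩
          (((1/2 : ℝ) • (Q * (Qᵀ * V + (Qᵀ * V)ᵀ)) + Qp * (Qpᵀ * V)) * Qᵀ),
        svec_sym ⟨hΨn1, hΨn2⟩ (V * Qᵀ)]
      refine congrArg (svec Ψn) ?_
      have hV : V = Q * (Qᵀ * V) + Qp * (Qpᵀ * V) := by
        rw [← Matrix.mul_assoc, ← Matrix.mul_assoc, ← Matrix.add_mul, hfull, Matrix.one_mul]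
      conv_rhs => rw [hV]
      generalize Qᵀ * V = A
      generalize Qpᵀ * V = B
      simp only [Matrix.transpose_add, Matrix.transpose_mul, Matrix.transpose_smul,
        Matrix.transpose_transpose, Matrix.add_mul, Matrix.mul_add, Matrix.smul_mul,
        Matrix.mul_smul, smul_add, Matrix.mul_assoc]
      module
  · have hb11 : (skron Ψn Ψr Q Q)ᵀ * skron Ψn Ψr Q Q = 1 := by
      apply mv_ext; intro v
      rw [Matrix.one_mulVec, trC1, skronQQ]
      simp only [← Matrix.mulVec_mulVec]
      rw [kron_mv' Q Q, hΨn2, kron_mv' Qᵀ Qᵀ, of_vecM, Matrix.transpose_transpose, sand1,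
        ← hΨr2, vecM_of, sb_cancel hΨr1, sb_cancel hΨr1]
    have hb12 : (skron Ψn Ψr Q Q)ᵀ * (Real.sqrt 2 • (Ψnᵀ * (Q ⊗ₖ Qp))) = 0 := by
      apply mv_ext; intro v
      rw [Matrix.zero_mulVec, trC1]
      simp only [← Matrix.mulVec_mulVec, Matrix.smul_mulVec, Matrix.mulVec_smul]
      rw [kron_mv' Q Qp, hΨn2, kron_mv' Qᵀ Qᵀ, of_vecM, Matrix.transpose_transpose, sand2]
      rw [show vecM (0 : Matrix (Fin r) (Fin r) ℝ) = (0 : Fin r × Fin r → ℝ) from rfl,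
        Matrix.mulVec_zero, smul_zero]
    have hb21 : (Real.sqrt 2 • (Ψnᵀ * (Q ⊗ₖ Qp)))ᵀ * skron Ψn Ψr Q Q = 0 := by
      have := congrArg Matrix.transpose hb12
      simpa [Matrix.transpose_mul] using this
    have hb22 : (Real.sqrt 2 • (Ψnᵀ * (Q ⊗ₖ Qp)))ᵀ * (Real.sqrt 2 • (Ψnᵀ * (Q ⊗ₖ Qp))) = 1 := by
      apply mv_ext; intro v
      rw [Matrix.one_mulVec, trC2]
      simp only [← Matrix.mulVec_mulVec, Matrix.smul_mulVec, Matrix.mulVec_smul]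
      rw [kron_mv' Q Qp, hΨn2, kron_mv Qᵀ Qpᵀ, of_vecM, Matrix.transpose_transpose, sand3,
        lam_smul, smul_smul, smul_smul]
      have : Real.sqrt 2 * Real.sqrt 2 * (1/2 : ℝ) = 1 := by
        rw [Real.mul_self_sqrt (by norm_num)]; norm_num
      rw [this, one_smul]
    rw [hbQ, Matrix.transpose_fromCols, Matrix.fromRows_mul_fromCols,
      hb11, hb12, hb21, hb22, Matrix.fromBlocks_one]
  · have hrn : r ≤ n := by
      have h1 : (1 : Matrix (Fin r) (Fin r) ℝ).rank = r := by
        rw [Matrix.rank_one, Fintype.card_fin]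
      have h2 : (Qᵀ * Q).rank ≤ Q.rank := Matrix.rank_mul_le_right _ _
      have h3 : Q.rank ≤ n := Q.rank_le_card_height.trans (Fintype.card_fin n).le
      rw [hQQ, h1] at h2
      exact h2.trans h3
    obtain ⟨k, rfl⟩ : ∃ k, n = r + k := ⟨n - r, by omega⟩
    simp only [Fintype.card_sum, Fintype.card_prod, Fintype.card_fin, Nat.add_sub_cancel_left]
    have e1 : 2 * (r * (r + 1) / 2) = r * (r + 1) :=
      Nat.two_mul_div_two_of_even (Nat.even_mul_succ_self r)
    have e2 : 2 * (r * (r - 1) / 2) = r * (r - 1) :=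
      Nat.two_mul_div_two_of_even (Nat.even_mul_pred_self r)
    have key2 : r * (r + 1) / 2 + r * k + r * (r - 1) / 2 = (r + k) * r := by
      have h2 : 2 * (r * (r + 1) / 2 + r * k + r * (r - 1) / 2) = 2 * ((r + k) * r) := by
        rw [Nat.mul_add, Nat.mul_add, e1, e2]
        rcases r with _ | s
        · simp
        · simp only [Nat.add_sub_cancel]
          ring
      exact Nat.eq_of_mul_eq_mul_left (by norm_num) h2
    generalize hA : r * (r + 1) / 2 = A at key2 ⊢
    generalize hB : r * (r - 1) / 2 = B at key2 ⊢
    generalize hC : r * k = C at key2 ⊢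
    generalize hD : (r + k) * r = D at key2 ⊢
    omega
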